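/- Let d ≥ 2 and let S be any set of vectors in ℝ^d containing strictly fewer than (d²+d)/2 vectors. Then there exist Gaussian measures P and Q on ℝ^d such that P_{⟨x⟩} = Q_{⟨x⟩} for all x ∈ S, but P ≠ Q. -/

import Mathlib

open MeasureTheory Real Matrix
open scoped ENNReal

/-- The projection of a measure on `ℝ^d` onto a vector subspace `H`. -/
noncomputable def projMeasure {d : ℕ} (H : Submodule ℝ (EuclideanSpace ℝ (Fin d)))
    (P : Measure (EuclideanSpace ℝ (Fin d))) : Measure (EuclideanSpace ℝ (Fin d)) :=
  P.map (fun x => (H.orthogonalProjectionOnto x : EuclideanSpace ℝ (Fin d)))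

/-- The measure on `ℝ^d` with Gaussian density of mean `μ` and covariance matrix `S`. -/
noncomputable def gaussMeasure {d : ℕ} (μ : EuclideanSpace ℝ (Fin d))
    (S : Matrix (Fin d) (Fin d) ℝ) : Measure (EuclideanSpace ℝ (Fin d)) :=
  volume.withDensity fun x => ENNReal.ofReal
    ((Real.sqrt ((2 * Real.pi) ^ d * S.det))⁻¹ *
      Real.exp (-(1 / 2) * ((fun i => x i - μ i) ⬝ᵥ S⁻¹.mulVec (fun i => x i - μ i))))

/-- `P` is a Gaussian measure on `ℝ^d`. -/
def IsGaussianD {d : ℕ} (P : Measure (EuclideanSpace ℝ (Fin d))) : Prop :=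
  ∃ (μ : EuclideanSpace ℝ (Fin d)) (S : Matrix (Fin d) (Fin d) ℝ),
    S.PosDef ∧ P = gaussMeasure μ S

/-!
The symmetric `d × d` matrices form a space of dimension `(d² + d)/2`, so there is a nonzero
symmetric `A` whose quadratic form vanishes on `S`. The centred Gaussians with covariances
`Σ± = (A ± 1)ᵀ(A ± 1) + 1` are distinct, since their covariances differ by `4A`.
Writing `N(0, Σ)` as the image of the rotation-invariant `N(0, 1)` under `√Σ`, its projection
onto `⟨x⟩` is the law of `⟨√Σ x, Z⟩ x / ‖x‖²` with `Z ~ N(0, 1)`; a reflection taking one vector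
to another of the same length shows that this law depends only on `‖√Σ x‖² = xᵀ Σ x`, which is
the same for `Σ+` and `Σ-` when `x ∈ S`.
-/

open scoped RealInnerProductSpace
open WithLp

theorem MeasurableEquiv.map_withDensity {α β : Type*} [MeasurableSpace α] [MeasurableSpace β]
    (μ : Measure α) (e : α ≃ᵐ β) (f : α → ℝ≥0∞) :
    (μ.withDensity f).map e = (μ.map e).withDensity (f ∘ e.symm) := by
  ext s hs
  rw [e.map_apply, withDensity_apply _ (e.measurable hs), withDensity_apply _ hs, e.restrict_map,
    lintegral_map_equiv]
  simp

theorem eq_of_withDensity_ofReal_eq {X : Type*} [TopologicalSpace X] [MeasurableSpace X]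
    [OpensMeasurableSpace X] {μ : Measure X} [SigmaFinite μ] [μ.IsOpenPosMeasure] {f g : X → ℝ}
    (hf : Continuous f) (hg : Continuous g) (hf₀ : 0 ≤ f) (hg₀ : 0 ≤ g)
    (h : μ.withDensity (fun x => ENNReal.ofReal (f x)) =
      μ.withDensity (fun x => ENNReal.ofReal (g x))) :
    f = g := by
  have h_ae := (withDensity_eq_iff_of_sigmaFinite (by fun_prop) (by fun_prop)).mp h
  have h_eq := ((ENNReal.continuous_ofReal.comp hf).ae_eq_iff_eq μ
    (ENNReal.continuous_ofReal.comp hg)).mp h_ae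
  funext x
  exact (ENNReal.ofReal_eq_ofReal_iff (hf₀ x) (hg₀ x)).mp (congrFun h_eq x)

theorem map_inner_eq_of_norm_eq {E : Type*} [NormedAddCommGroup E] [InnerProductSpace ℝ E]
    [MeasurableSpace E] [BorelSpace E] {ν : Measure E} (hν : ∀ L : E ≃ₗᵢ[ℝ] E, ν.map L = ν)
    {u v : E} (h : ‖u‖ = ‖v‖) :
    ν.map (fun y => ⟪u, y⟫) = ν.map (fun y => ⟪v, y⟫) := by
  set R := (ℝ ∙ (u - v))ᗮ.reflection
  have hR : (fun y => ⟪v, y⟫) = (fun y => ⟪u, y⟫) ∘ R := by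
    funext y
    rw [Function.comp_apply, ← Submodule.reflection_sub h, ← R.inner_map_map,
      Submodule.reflection_reflection]
  rw [hR, ← Measure.map_map (by fun_prop) R.continuous.measurable, hν]

theorem card_sym2_fin (d : ℕ) : Fintype.card (Sym2 (Fin d)) = (d ^ 2 + d) / 2 := by
  rw [Sym2.card, Fintype.card_fin, Nat.choose_two_right, add_tsub_cancel_right]
  ring_nf

theorem exists_isHermitian_ne_zero_forall_dotProduct_mulVec_eq_zero {n : Type*} [Fintype n]
    {S : Set (n → ℝ)} (hS : S.encard < Fintype.card (Sym2 n)) :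
    ∃ A : Matrix n n ℝ, A.IsHermitian ∧ A ≠ 0 ∧ ∀ x ∈ S, x ⬝ᵥ A *ᵥ x = 0 := by
  have : Fintype S := (Set.finite_of_encard_le_coe hS.le).fintype
  let Φ : (Sym2 n → ℝ) →ₗ[ℝ] S → ℝ :=
    { toFun c x := (x : n → ℝ) ⬝ᵥ (of fun i j => c s(i, j)) *ᵥ x
      map_add' c c' := funext fun x => by
        change _ ⬝ᵥ (of (fun i j => c s(i, j)) + of fun i j => c' s(i, j)) *ᵥ _ = _
        rw [add_mulVec, dotProduct_add]
        rfl
      map_smul' r c := funext fun x => by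
        change _ ⬝ᵥ (r • of fun i j => c s(i, j)) *ᵥ _ = _
        rw [smul_mulVec, dotProduct_smul]
        rfl }
  have h_dim : Module.finrank ℝ (S → ℝ) < Module.finrank ℝ (Sym2 n → ℝ) := by
    rw [Module.finrank_fintype_fun_eq_card, Module.finrank_fintype_fun_eq_card,
      ← ENat.natCast_lt_natCast, ← Set.toFinset_card, ← Set.encard_eq_coe_toFinset_card]
    exact hS
  obtain ⟨c, hc, hc0⟩ := Submodule.exists_mem_ne_zero_of_ne_bot (Φ.ker_ne_bot_of_finrank_lt h_dim)
  refine ⟨of fun i j => c s(i, j), ?_, ?_, fun x hx => congrFun hc ⟨x, hx⟩⟩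
  · ext i j
    simp [Sym2.eq_swap]
  · contrapose! hc0
    funext p
    induction p using Sym2.ind with
    | _ i j => exact congrFun (congrFun hc0 i) j

section EuclideanMatrix

variable {n : Type*} [Fintype n] [DecidableEq n]

theorem Matrix.IsHermitian.eq_of_forall_dotProduct_mulVec_eq {A B : Matrix n n ℝ}
    (hA : A.IsHermitian) (hB : B.IsHermitian)
    (h : ∀ v, v ⬝ᵥ A *ᵥ v = v ⬝ᵥ B *ᵥ v) : A = B := by
  have h_symm : (toEuclideanLin (A - B)).IsSymmetric :=
    isSymmetric_toEuclideanLin_iff.mpr (hA.sub hB)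
  rw [← sub_eq_zero, ← toEuclideanLin.map_eq_zero_iff, ← h_symm.inner_map_self_eq_zero]
  intro x
  rw [map_sub, LinearMap.sub_apply, inner_sub_left, ← coe_toEuclideanCLM_eq_toEuclideanLin,
    ← coe_toEuclideanCLM_eq_toEuclideanLin, ContinuousLinearMap.coe_coe,
    ContinuousLinearMap.coe_coe, real_inner_comm x, real_inner_comm x, inner_toEuclideanCLM,
    inner_toEuclideanCLM, h, sub_self]

theorem det_toEuclideanCLM (M : Matrix n n ℝ) :
    LinearMap.det (toEuclideanCLM (𝕜 := ℝ) M : EuclideanSpace ℝ n →ₗ[ℝ] _) = M.det := by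
  rw [coe_toEuclideanCLM_eq_toEuclideanLin, toEuclideanLin_eq_toLin_orthonormal,
    LinearMap.det_toLin]

theorem norm_adjoint_toEuclideanCLM_sq (M : Matrix n n ℝ) (x : EuclideanSpace ℝ n) :
    ‖ContinuousLinearMap.adjoint (toEuclideanCLM (𝕜 := ℝ) M) x‖ ^ 2 =
      ofLp x ⬝ᵥ (M * Mᵀ) *ᵥ ofLp x := by
  rw [← real_inner_self_eq_norm_sq, ContinuousLinearMap.adjoint_inner_right, real_inner_comm,
    ← ContinuousLinearMap.star_eq_adjoint, ← map_star, ← mul_apply_eq_comp, ← map_mul,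
    inner_toEuclideanCLM, star_eq_conjTranspose, conjTranspose_eq_transpose_of_trivial]

open scoped MatrixOrder in
theorem sqrt_mul_transpose_sqrt {S : Matrix n n ℝ} (hS : S.PosSemidef) :
    CFC.sqrt S * (CFC.sqrt S)ᵀ = S := by
  rw [← conjTranspose_eq_transpose_of_trivial, ← star_eq_conjTranspose,
    (CFC.sqrt_nonneg S).isSelfAdjoint.star_eq, CFC.sqrt_mul_sqrt_self S hS.nonneg]

end EuclideanMatrix

theorem projMeasure_span_singleton_map {d : ℕ} (ν : Measure (EuclideanSpace ℝ (Fin d)))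
    (T : EuclideanSpace ℝ (Fin d) →L[ℝ] EuclideanSpace ℝ (Fin d)) (x : EuclideanSpace ℝ (Fin d)) :
    projMeasure (Submodule.span ℝ {x}) (ν.map T) =
      (ν.map fun y => ⟪ContinuousLinearMap.adjoint T x, y⟫).map fun t => (t / ‖x‖ ^ 2) • x := by
  have h_proj : (fun y => ((Submodule.span ℝ {x}).orthogonalProjectionOnto y :
      EuclideanSpace ℝ (Fin d))) ∘ T =
      (fun t => (t / ‖x‖ ^ 2) • x) ∘ fun y => ⟪ContinuousLinearMap.adjoint T x, y⟫ := by
    funext y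
    rw [Function.comp_apply, ← Submodule.starProjection_apply, Submodule.starProjection_singleton,
      Function.comp_apply, ContinuousLinearMap.adjoint_inner_left]
    rfl
  rw [projMeasure, Measure.map_map (by fun_prop) T.continuous.measurable, h_proj,
    ← Measure.map_map (by fun_prop) (by fun_prop)]

section Gaussian

variable {d : ℕ}

noncomputable def gaussDensity (S : Matrix (Fin d) (Fin d) ℝ) (x : EuclideanSpace ℝ (Fin d)) :
    ℝ :=
  (√((2 * π) ^ d * S.det))⁻¹ * exp (-(1 / 2) * (ofLp x ⬝ᵥ S⁻¹ *ᵥ ofLp x))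

theorem gaussMeasure_zero_eq_withDensity (S : Matrix (Fin d) (Fin d) ℝ) :
    gaussMeasure 0 S = volume.withDensity fun x => ENNReal.ofReal (gaussDensity S x) := by
  simp only [gaussMeasure, gaussDensity, PiLp.zero_apply, sub_zero]

@[fun_prop]
theorem continuous_gaussDensity (S : Matrix (Fin d) (Fin d) ℝ) : Continuous (gaussDensity S) := by
  unfold gaussDensity
  fun_prop

theorem gaussDensity_nonneg (S : Matrix (Fin d) (Fin d) ℝ) : 0 ≤ gaussDensity S := fun _ => by
  unfold gaussDensity
  positivity

theorem gaussDensity_one (x : EuclideanSpace ℝ (Fin d)) :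
    gaussDensity 1 x = (√((2 * π) ^ d))⁻¹ * exp (-(1 / 2) * ‖x‖ ^ 2) := by
  rw [gaussDensity, det_one, mul_one, inv_one, one_mulVec, ← real_inner_self_eq_norm_sq,
    EuclideanSpace.inner_eq_star_dotProduct, star_trivial]

theorem abs_det_inv_mul_gaussDensity {S : Matrix (Fin d) (Fin d) ℝ} (hS : 0 ≤ S.det)
    (M : Matrix (Fin d) (Fin d) ℝ) (y : EuclideanSpace ℝ (Fin d)) :
    |M.det|⁻¹ * gaussDensity S (toEuclideanCLM (𝕜 := ℝ) M⁻¹ y) =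
      gaussDensity (M * S * Mᵀ) y := by
  have h_quad : (M⁻¹ *ᵥ ofLp y) ⬝ᵥ S⁻¹ *ᵥ (M⁻¹ *ᵥ ofLp y) =
      ofLp y ⬝ᵥ (M * S * Mᵀ)⁻¹ *ᵥ ofLp y := by
    rw [Matrix.mul_inv_rev, Matrix.mul_inv_rev, ← transpose_nonsing_inv, ← mulVec_mulVec,
      dotProduct_mulVec (ofLp y), vecMul_transpose, mulVec_mulVec]
  have h_norm : √((2 * π) ^ d * (M * S * Mᵀ).det) = √((2 * π) ^ d * S.det) * |M.det| := by
    rw [det_mul, det_mul, det_transpose, ← sqrt_sq_eq_abs, ← sqrt_mul (by positivity)]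
    ring_nf
  rw [gaussDensity, gaussDensity, ofLp_toEuclideanCLM, h_quad, h_norm, mul_inv]
  ring

theorem map_toEuclideanCLM_gaussMeasure_zero {S : Matrix (Fin d) (Fin d) ℝ} (hS : 0 ≤ S.det)
    {M : Matrix (Fin d) (Fin d) ℝ} (hM : IsUnit M) :
    (gaussMeasure 0 S).map (toEuclideanCLM (𝕜 := ℝ) M) = gaussMeasure 0 (M * S * Mᵀ) := by
  have hM_det : IsUnit M.det := (isUnit_iff_isUnit_det M).mp hM
  let L := ContinuousLinearEquiv.equivOfInverse (toEuclideanCLM (𝕜 := ℝ) M)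
    (toEuclideanCLM (𝕜 := ℝ) M⁻¹)
    (fun x => by ext1; simp [mulVec_mulVec, nonsing_inv_mul _ hM_det])
    (fun x => by ext1; simp [mulVec_mulVec, mul_nonsing_inv _ hM_det])
  let e := L.toHomeomorph.toMeasurableEquiv
  have h_volume : volume.map e = ENNReal.ofReal |M.det|⁻¹ • volume := by
    have := Measure.map_linearMap_addHaar_eq_smul_addHaar volume
      (f := (toEuclideanCLM (𝕜 := ℝ) M : EuclideanSpace ℝ (Fin d) →ₗ[ℝ] _))
      (by rw [det_toEuclideanCLM]; exact hM_det.ne_zero)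
    rwa [det_toEuclideanCLM, abs_inv] at this
  rw [gaussMeasure_zero_eq_withDensity, gaussMeasure_zero_eq_withDensity,
    show ⇑(toEuclideanCLM (𝕜 := ℝ) M) = e from rfl,
    MeasurableEquiv.map_withDensity, h_volume, withDensity_smul_measure,
    ← withDensity_smul _ (by fun_prop)]
  congr 1
  funext y
  rw [Pi.smul_apply, Function.comp_apply, smul_eq_mul, ← ENNReal.ofReal_mul (by positivity),
    ← abs_det_inv_mul_gaussDensity hS]
  rfl

theorem map_linearIsometryEquiv_gaussMeasure_zero_one
    (L : EuclideanSpace ℝ (Fin d) ≃ₗᵢ[ℝ] EuclideanSpace ℝ (Fin d)) :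
    (gaussMeasure 0 1).map L = gaussMeasure 0 1 := by
  rw [gaussMeasure_zero_eq_withDensity, ← L.coe_toMeasurableEquiv,
    MeasurableEquiv.map_withDensity, L.coe_toMeasurableEquiv, L.measurePreserving.map_eq]
  congr 1
  funext x
  simp only [Function.comp_apply, L.coe_symm_toMeasurableEquiv, gaussDensity_one,
    LinearIsometryEquiv.norm_map]

open scoped MatrixOrder in
theorem gaussMeasure_zero_eq_map_sqrt {S : Matrix (Fin d) (Fin d) ℝ} (hS : S.PosDef) :
    gaussMeasure 0 S = (gaussMeasure 0 1).map (toEuclideanCLM (𝕜 := ℝ) (CFC.sqrt S)) := by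
  have h_sq := sqrt_mul_transpose_sqrt hS.posSemidef
  have h_unit : IsUnit (CFC.sqrt S) := by
    rw [isUnit_iff_isUnit_det, isUnit_iff_ne_zero]
    intro h
    have h_det := hS.det_pos
    rw [← h_sq, det_mul, h, zero_mul] at h_det
    exact lt_irrefl 0 h_det
  rw [map_toEuclideanCLM_gaussMeasure_zero (by simp) h_unit, mul_one, h_sq]

theorem projMeasure_span_gaussMeasure_zero_eq {S₁ S₂ : Matrix (Fin d) (Fin d) ℝ}
    (hS₁ : S₁.PosDef) (hS₂ : S₂.PosDef) {x : EuclideanSpace ℝ (Fin d)}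
    (hx : ofLp x ⬝ᵥ S₁ *ᵥ ofLp x = ofLp x ⬝ᵥ S₂ *ᵥ ofLp x) :
    projMeasure (Submodule.span ℝ {x}) (gaussMeasure 0 S₁) =
      projMeasure (Submodule.span ℝ {x}) (gaussMeasure 0 S₂) := by
  rw [gaussMeasure_zero_eq_map_sqrt hS₁, gaussMeasure_zero_eq_map_sqrt hS₂,
    projMeasure_span_singleton_map, projMeasure_span_singleton_map,
    map_inner_eq_of_norm_eq map_linearIsometryEquiv_gaussMeasure_zero_one]
  rw [← sq_eq_sq₀ (norm_nonneg _) (norm_nonneg _), norm_adjoint_toEuclideanCLM_sq,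
    norm_adjoint_toEuclideanCLM_sq, sqrt_mul_transpose_sqrt hS₁.posSemidef,
    sqrt_mul_transpose_sqrt hS₂.posSemidef, hx]

theorem eq_of_gaussDensity_eq {S₁ S₂ : Matrix (Fin d) (Fin d) ℝ} (hS₁ : S₁.PosDef)
    (hS₂ : S₂.PosDef) (h : gaussDensity S₁ = gaussDensity S₂) : S₁ = S₂ := by
  have h_const : (√((2 * π) ^ d * S₁.det))⁻¹ = (√((2 * π) ^ d * S₂.det))⁻¹ := by
    simpa [gaussDensity] using congrFun h 0
  have h_quad (v : Fin d → ℝ) : v ⬝ᵥ S₁⁻¹ *ᵥ v = v ⬝ᵥ S₂⁻¹ *ᵥ v := by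
    have := congrFun h (toLp 2 v)
    rw [gaussDensity, gaussDensity, h_const, mul_right_inj' (by have := hS₂.det_pos; positivity),
      exp_eq_exp, mul_right_inj' (by norm_num)] at this
    exact this
  exact Matrix.inv_inj
    (hS₁.isHermitian.inv.eq_of_forall_dotProduct_mulVec_eq hS₂.isHermitian.inv h_quad)
    (isUnit_iff_ne_zero.mpr hS₁.det_pos.ne')

theorem eq_of_gaussMeasure_zero_eq {S₁ S₂ : Matrix (Fin d) (Fin d) ℝ} (hS₁ : S₁.PosDef)
    (hS₂ : S₂.PosDef) (h : gaussMeasure 0 S₁ = gaussMeasure 0 S₂) : S₁ = S₂ := by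
  rw [gaussMeasure_zero_eq_withDensity, gaussMeasure_zero_eq_withDensity] at h
  exact eq_of_gaussDensity_eq hS₁ hS₂ (eq_of_withDensity_ofReal_eq (continuous_gaussDensity _)
    (continuous_gaussDensity _) (gaussDensity_nonneg _) (gaussDensity_nonneg _) h)

end Gaussian

theorem gaussian_not_determined_by_few_lines_general {d : ℕ}
    (S : Set (EuclideanSpace ℝ (Fin d)))
    (hcard : S.encard < ((d ^ 2 + d) / 2 : ℕ)) :
    ∃ P Q : Measure (EuclideanSpace ℝ (Fin d)), IsGaussianD P ∧ IsGaussianD Q ∧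
      (∀ x ∈ S, projMeasure (Submodule.span ℝ {x}) P =
        projMeasure (Submodule.span ℝ {x}) Q) ∧ P ≠ Q := by
  obtain ⟨A, hA, hA0, hAS⟩ := exists_isHermitian_ne_zero_forall_dotProduct_mulVec_eq_zero
    (S := ofLp '' S) ((Set.encard_image_le _ _).trans_lt (by rwa [card_sym2_fin]))
  have h_pos (B : Matrix (Fin d) (Fin d) ℝ) : (Bᴴ * B + 1).PosDef :=
    PosDef.posSemidef_add (posSemidef_conjTranspose_mul_self B) PosDef.one
  have h_diff : (A + 1)ᴴ * (A + 1) + 1 = (A - 1)ᴴ * (A - 1) + 1 + (4 : ℝ) • A := by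
    rw [conjTranspose_add, conjTranspose_sub, conjTranspose_one, hA.eq]
    simp only [add_mul, mul_add, sub_mul, mul_sub, one_mul, mul_one]
    module
  refine ⟨gaussMeasure 0 ((A + 1)ᴴ * (A + 1) + 1), gaussMeasure 0 ((A - 1)ᴴ * (A - 1) + 1),
    ⟨0, _, h_pos _, rfl⟩, ⟨0, _, h_pos _, rfl⟩, fun x hx => ?_, fun h => ?_⟩
  · refine projMeasure_span_gaussMeasure_zero_eq (h_pos _) (h_pos _) ?_
    rw [h_diff, add_mulVec, dotProduct_add, smul_mulVec, dotProduct_smul,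
      hAS _ (Set.mem_image_of_mem _ hx), smul_zero, add_zero]
  · have h_eq := eq_of_gaussMeasure_zero_eq (h_pos _) (h_pos _) h
    rw [h_diff, add_eq_left, smul_eq_zero] at h_eq
    exact hA0 (h_eq.resolve_left (by norm_num))

/-- If `S ⊆ ℝ^d` has strictly fewer than `(d² + d)/2` elements, then there are two
distinct Gaussian measures on `ℝ^d` whose projections onto the line spanned by `x`
coincide for every `x ∈ S`. -/
theorem gaussian_not_determined_by_few_lines {d : ℕ} (hd : 2 ≤ d)
    (S : Set (EuclideanSpace ℝ (Fin d)))
    (hcard : S.encard < ((d ^ 2 + d) / 2 : ℕ)) :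
    ∃ P Q : Measure (EuclideanSpace ℝ (Fin d)), IsGaussianD P ∧ IsGaussianD Q ∧
      (∀ x ∈ S, projMeasure (Submodule.span ℝ {x}) P =
        projMeasure (Submodule.span ℝ {x}) Q) ∧ P ≠ Q :=
  gaussian_not_determined_by_few_lines_general S hcard
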